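/- arXiv:1809.11085 — 2 statements merged into one kernel-verified Lean document; each statement's English description precedes it below -/
import Mathlib

section
/- Let X be a real m×n matrix (m ≥ n), 0 < s ≤ ‖X‖₂²/100, and E symmetric with ‖E‖₂ ≤ s/10. If R is invertible with RᵀR = XᵀX + sI + E, then ‖X R⁻¹‖₂ ≤ √(1 + 1.1/0.9) ≤ 1.5. -/
open Matrix BigOperators

noncomputable def spec {m n : ℕ} (A : Matrix (Fin m) (Fin n) ℝ) : ℝ :=
  ‖LinearMap.toContinuousLinearMap (Matrix.toEuclideanLin A)‖

noncomputable def frob {m n : ℕ} (A : Matrix (Fin m) (Fin n) ℝ) : ℝ :=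
  Real.sqrt (∑ i, ∑ j, (A i j)^2)

noncomputable def sigmaMin {m n : ℕ} (A : Matrix (Fin m) (Fin n) ℝ) : ℝ :=
  ⨅ x : {x : EuclideanSpace ℝ (Fin n) // ‖x‖ = 1}, ‖Matrix.toEuclideanLin A x‖

noncomputable def lamMin {n : ℕ} (A : Matrix (Fin n) (Fin n) ℝ) : ℝ :=
  ⨅ x : {x : EuclideanSpace ℝ (Fin n) // ‖x‖ = 1},
    (inner ℝ (Matrix.toEuclideanLin A x) (x : EuclideanSpace ℝ (Fin n)) : ℝ)

noncomputable def lamMax {n : ℕ} (A : Matrix (Fin n) (Fin n) ℝ) : ℝ :=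
  ⨆ x : {x : EuclideanSpace ℝ (Fin n) // ‖x‖ = 1},
    (inner ℝ (Matrix.toEuclideanLin A x) (x : EuclideanSpace ℝ (Fin n)) : ℝ)

/-!
Put `y = R⁻¹ x`. Then `‖x‖² - ‖X R⁻¹ x‖² = ‖R y‖² - ‖X y‖² = s ‖y‖² + ⟪E y, y⟫ ≥ (s - ‖E‖₂) ‖y‖² ≥ 0`,
so in fact `‖X R⁻¹‖₂ ≤ 1 ≤ √(1 + 1.1 / 0.9)`.
-/

section

variable {m n k : ℕ}

lemma toEuclideanLin_mul_apply (A : Matrix (Fin m) (Fin n) ℝ) (B : Matrix (Fin n) (Fin k) ℝ)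
    (x : EuclideanSpace ℝ (Fin k)) :
    toEuclideanLin (A * B) x = toEuclideanLin A (toEuclideanLin B x) := by
  simp [toLpLin_apply, mulVec_mulVec]

lemma inner_toEuclideanLin_transpose_mul_self (A : Matrix (Fin m) (Fin n) ℝ)
    (x : EuclideanSpace ℝ (Fin n)) :
    inner ℝ (toEuclideanLin (Aᵀ * A) x) x = ‖toEuclideanLin A x‖ ^ 2 := by
  rw [toEuclideanLin_mul_apply, ← conjTranspose_eq_transpose_of_trivial,
    toEuclideanLin_conjTranspose_eq_adjoint, LinearMap.adjoint_inner_left,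
    real_inner_self_eq_norm_sq]

lemma norm_toEuclideanLin_le_spec_mul (A : Matrix (Fin m) (Fin n) ℝ)
    (x : EuclideanSpace ℝ (Fin n)) : ‖toEuclideanLin A x‖ ≤ spec A * ‖x‖ :=
  (LinearMap.toContinuousLinearMap (toEuclideanLin A)).le_opNorm x

lemma spec_le_of_norm_le {A : Matrix (Fin m) (Fin n) ℝ} {C : ℝ} (hC : 0 ≤ C)
    (h : ∀ x, ‖toEuclideanLin A x‖ ≤ C * ‖x‖) : spec A ≤ C :=
  ContinuousLinearMap.opNorm_le_bound _ hC h

lemma neg_spec_mul_norm_sq_le_inner (A : Matrix (Fin n) (Fin n) ℝ)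
    (x : EuclideanSpace ℝ (Fin n)) :
    -(spec A * ‖x‖ ^ 2) ≤ inner ℝ (toEuclideanLin A x) x := by
  have := (abs_real_inner_le_norm (toEuclideanLin A x) x).trans
    (mul_le_mul_of_nonneg_right (norm_toEuclideanLin_le_spec_mul A x) (norm_nonneg x))
  rw [mul_assoc, ← sq] at this
  exact (abs_le.mp this).1

lemma norm_toEuclideanLin_le_of_transpose_mul_self_eq {X : Matrix (Fin m) (Fin n) ℝ}
    {R E : Matrix (Fin n) (Fin n) ℝ} {s : ℝ} (hEs : spec E ≤ s)
    (hR : Rᵀ * R = Xᵀ * X + s • 1 + E) (y : EuclideanSpace ℝ (Fin n)) :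
    ‖toEuclideanLin X y‖ ≤ ‖toEuclideanLin R y‖ := by
  have hgram : ‖toEuclideanLin R y‖ ^ 2
      = ‖toEuclideanLin X y‖ ^ 2 + s * ‖y‖ ^ 2 + inner ℝ (toEuclideanLin E y) y := by
    rw [← inner_toEuclideanLin_transpose_mul_self, hR, ← inner_toEuclideanLin_transpose_mul_self]
    simp [inner_add_left, real_inner_smul_left]
  have hshift : 0 ≤ s * ‖y‖ ^ 2 + inner ℝ (toEuclideanLin E y) y := by
    linarith [neg_spec_mul_norm_sq_le_inner E y, mul_le_mul_of_nonneg_right hEs (sq_nonneg ‖y‖)]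
  exact (pow_le_pow_iff_left₀ (norm_nonneg _) (norm_nonneg _) two_ne_zero).mp (by linarith)

lemma spec_mul_inv_le_one {X : Matrix (Fin m) (Fin n) ℝ}
    {R E : Matrix (Fin n) (Fin n) ℝ} {s : ℝ} (hEs : spec E ≤ s) (hRunit : IsUnit R)
    (hR : Rᵀ * R = Xᵀ * X + s • 1 + E) : spec (X * R⁻¹) ≤ 1 := by
  refine spec_le_of_norm_le zero_le_one fun x => ?_
  have hRR : R * R⁻¹ = 1 := mul_nonsing_inv R ((isUnit_iff_isUnit_det R).mp hRunit)
  calc ‖toEuclideanLin (X * R⁻¹) x‖ = ‖toEuclideanLin X (toEuclideanLin R⁻¹ x)‖ := by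
        rw [toEuclideanLin_mul_apply]
    _ ≤ ‖toEuclideanLin R (toEuclideanLin R⁻¹ x)‖ :=
        norm_toEuclideanLin_le_of_transpose_mul_self_eq hEs hR _
    _ = 1 * ‖x‖ := by rw [← toEuclideanLin_mul_apply, hRR, one_mul]; simp

end

theorem stmt1_general {m n : ℕ} (X : Matrix (Fin m) (Fin n) ℝ)
    (s : ℝ)
    (E : Matrix (Fin n) (Fin n) ℝ) (hEs : spec E ≤ s / 10)
    (R : Matrix (Fin n) (Fin n) ℝ) (hRunit : IsUnit R)
    (hchol : Rᵀ * R = Xᵀ * X + s • (1 : Matrix (Fin n) (Fin n) ℝ) + E) :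
    spec (X * R⁻¹) ≤ Real.sqrt (1 + 1.1 / 0.9) ∧
    Real.sqrt (1 + 1.1 / 0.9) ≤ 1.5 := by
  have hspec : spec E ≤ s := hEs.trans (by linarith [(norm_nonneg _).trans hEs])
  refine ⟨(spec_mul_inv_le_one hspec hRunit hchol).trans ?_, ?_⟩
  · exact Real.one_le_sqrt.mpr (by norm_num)
  · exact Real.sqrt_le_iff.mpr ⟨by norm_num, by norm_num⟩

theorem stmt1 {m n : ℕ} (hmn : n ≤ m) (X : Matrix (Fin m) (Fin n) ℝ)
    (s : ℝ) (hs : 0 < s) (hs' : s ≤ spec X ^ 2 / 100)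
    (E : Matrix (Fin n) (Fin n) ℝ) (hE : Eᵀ = E) (hEs : spec E ≤ s / 10)
    (R : Matrix (Fin n) (Fin n) ℝ) (hRunit : IsUnit R)
    (hchol : Rᵀ * R = Xᵀ * X + s • (1 : Matrix (Fin n) (Fin n) ℝ) + E) :
    spec (X * R⁻¹) ≤ Real.sqrt (1 + 1.1 / 0.9) ∧
    Real.sqrt (1 + 1.1 / 0.9) ≤ 1.5 :=
  stmt1_general X s E hEs R hRunit hchol
end

section
/- Let X and ΔX be real m×n matrices and R an invertible n×n matrix, and set Q = (X + ΔX)R⁻¹. Then ‖QᵀQ − I + R⁻ᵀ(sI + E)R⁻¹‖₂ ≤ 2‖R⁻¹‖₂·‖XR⁻¹‖₂·‖ΔX‖₂ + ‖R⁻¹‖₂²·‖ΔX‖₂², provided RᵀR = XᵀX + sI + E. -/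
open Matrix BigOperators

/-!
With `A = X R⁻¹` and `B = ΔX R⁻¹` we have `Q = A + B`, and the Cholesky relation gives
`AᵀA = I - R⁻ᵀ(sI + E)R⁻¹`. Hence the matrix to be bounded is `QᵀQ - AᵀA = AᵀB + BᵀA + BᵀB`,
whose spectral norm is at most `2‖A‖‖B‖ + ‖B‖²`, and `‖B‖ ≤ ‖ΔX‖‖R⁻¹‖`.
-/

open scoped Matrix.Norms.L2Operator

namespace Matrix

lemma transpose_mul_self_of_transpose_mul_self_eq_add {m n R : Type*} [Fintype m] [Fintype n]
    [DecidableEq n] [CommRing R] {X : Matrix m n R} {C F : Matrix n n R} (hC : IsUnit C)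
    (h : Cᵀ * C = Xᵀ * X + F) :
    (X * C⁻¹)ᵀ * (X * C⁻¹) = 1 - (C⁻¹)ᵀ * F * C⁻¹ := by
  have hCC : C * C⁻¹ = 1 := mul_nonsing_inv C ((isUnit_iff_isUnit_det C).mp hC)
  have hXX : Xᵀ * X = Cᵀ * C - F := eq_sub_of_add_eq h.symm
  calc (X * C⁻¹)ᵀ * (X * C⁻¹) = (C⁻¹)ᵀ * (Xᵀ * X) * C⁻¹ := by
        simp only [transpose_mul, Matrix.mul_assoc]
    _ = (C * C⁻¹)ᵀ * (C * C⁻¹) - (C⁻¹)ᵀ * F * C⁻¹ := by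
        simp only [hXX, transpose_mul, Matrix.mul_sub, Matrix.sub_mul, Matrix.mul_assoc]
    _ = 1 - (C⁻¹)ᵀ * F * C⁻¹ := by rw [hCC, transpose_one, Matrix.one_mul]

variable {𝕜 m n : Type*} [RCLike 𝕜] [Fintype m] [DecidableEq m] [Fintype n] [DecidableEq n]

lemma l2_opNorm_conjTranspose_mul_le (A B : Matrix m n 𝕜) :
    ‖Aᴴ * B‖ ≤ ‖A‖ * ‖B‖ :=
  (l2_opNorm_conjTranspose A).symm ▸ l2_opNorm_mul Aᴴ B

lemma l2_opNorm_conjTranspose_mul_self_add_sub_le (A B : Matrix m n 𝕜) :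
    ‖(A + B)ᴴ * (A + B) - Aᴴ * A‖ ≤ 2 * ‖A‖ * ‖B‖ + ‖B‖ ^ 2 := by
  have hexpand : (A + B)ᴴ * (A + B) - Aᴴ * A = Aᴴ * B + Bᴴ * A + Bᴴ * B := by
    rw [conjTranspose_add, Matrix.add_mul, Matrix.mul_add, Matrix.mul_add]
    abel
  have hAB := l2_opNorm_conjTranspose_mul_le A B
  have hBA := l2_opNorm_conjTranspose_mul_le B A
  have hBB := l2_opNorm_conjTranspose_mul_le B B
  calc ‖(A + B)ᴴ * (A + B) - Aᴴ * A‖ ≤ ‖Aᴴ * B‖ + ‖Bᴴ * A‖ + ‖Bᴴ * B‖ := by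
        rw [hexpand]; exact norm_add₃_le
    _ ≤ 2 * ‖A‖ * ‖B‖ + ‖B‖ ^ 2 := by nlinarith

end Matrix

lemma spec_eq_l2_opNorm {m n : ℕ} (A : Matrix (Fin m) (Fin n) ℝ) : spec A = ‖A‖ := rfl

theorem stmt4_general {m n : ℕ} (X ΔX : Matrix (Fin m) (Fin n) ℝ)
    (R : Matrix (Fin n) (Fin n) ℝ) (hRunit : IsUnit R)
    (s : ℝ) (E : Matrix (Fin n) (Fin n) ℝ)
    (hchol : Rᵀ * R = Xᵀ * X + s • (1 : Matrix (Fin n) (Fin n) ℝ) + E)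
    (Q : Matrix (Fin m) (Fin n) ℝ) (hQ : Q = (X + ΔX) * R⁻¹) :
    spec (Qᵀ * Q - 1 + (R⁻¹)ᵀ * (s • (1 : Matrix (Fin n) (Fin n) ℝ) + E) * R⁻¹) ≤
      2 * spec R⁻¹ * spec (X * R⁻¹) * spec ΔX + spec R⁻¹ ^ 2 * spec ΔX ^ 2 := by
  rw [add_assoc] at hchol
  have hgram := transpose_mul_self_of_transpose_mul_self_eq_add hRunit hchol
  have hsplit : Qᵀ * Q - 1 + (R⁻¹)ᵀ * (s • 1 + E) * R⁻¹ =
      (X * R⁻¹ + ΔX * R⁻¹)ᴴ * (X * R⁻¹ + ΔX * R⁻¹) - (X * R⁻¹)ᴴ * (X * R⁻¹) := by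
    simp only [conjTranspose_eq_transpose_of_trivial, hgram, hQ, Matrix.add_mul]
    abel
  simp only [spec_eq_l2_opNorm, hsplit]
  calc _ ≤ 2 * ‖X * R⁻¹‖ * ‖ΔX * R⁻¹‖ + ‖ΔX * R⁻¹‖ ^ 2 :=
        l2_opNorm_conjTranspose_mul_self_add_sub_le _ _
    _ ≤ 2 * ‖X * R⁻¹‖ * (‖ΔX‖ * ‖R⁻¹‖) + (‖ΔX‖ * ‖R⁻¹‖) ^ 2 := by
        gcongr <;> exact l2_opNorm_mul ΔX R⁻¹
    _ = 2 * ‖R⁻¹‖ * ‖X * R⁻¹‖ * ‖ΔX‖ + ‖R⁻¹‖ ^ 2 * ‖ΔX‖ ^ 2 := by ring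

theorem stmt4 {m n : ℕ} (X ΔX : Matrix (Fin m) (Fin n) ℝ)
    (R : Matrix (Fin n) (Fin n) ℝ) (hRunit : IsUnit R)
    (s : ℝ) (E : Matrix (Fin n) (Fin n) ℝ) (hE : Eᵀ = E)
    (hchol : Rᵀ * R = Xᵀ * X + s • (1 : Matrix (Fin n) (Fin n) ℝ) + E)
    (Q : Matrix (Fin m) (Fin n) ℝ) (hQ : Q = (X + ΔX) * R⁻¹) :
    spec (Qᵀ * Q - 1 + (R⁻¹)ᵀ * (s • (1 : Matrix (Fin n) (Fin n) ℝ) + E) * R⁻¹) ≤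
      2 * spec R⁻¹ * spec (X * R⁻¹) * spec ΔX + spec R⁻¹ ^ 2 * spec ΔX ^ 2 :=
  stmt4_general X ΔX R hRunit s E hchol Q hQ
end
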